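/- arXiv:2506.22608 — 3 statements merged into one kernel-verified Lean document; each statement's English description precedes it below -/
import Mathlib

section
/- Let α be a positive integer, Ω a nonempty finite set, and let μ assign to each subset S of {1,…,α} a probability mass function μ_S on Ω, satisfying the cut-and-paste property: h(μ_{S∪T}, μ_∅) = h(μ_S, μ_T) for all pairwise disjoint subsets S, T of {1,…,α}. Let k ≥ 1 be an integer and let S_1, …, S_m be pairwise disjoint subsets of {1,…,α}, each of size at most k. Then Σ_{i=1}^{α} h²(μ_∅, μ_{{i}}) ≥ (1/(2k)) · Σ_{j=1}^{m} h²(μ_∅, μ_{S_j}). -/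
/-- The squared Hellinger distance between two probability mass functions on a
finite set: `h²(p,q) = (1/2)·Σ_ω (√(p ω) − √(q ω))²`. -/
noncomputable def hellingerSq {Ω : Type*} [Fintype Ω] (p q : Ω → ℝ) : ℝ :=
  (1 / 2) * ∑ ω, (Real.sqrt (p ω) - Real.sqrt (q ω)) ^ 2

/-- The Hellinger distance `h(p,q) = √(h²(p,q))`. -/
noncomputable def hellinger {Ω : Type*} [Fintype Ω] (p q : Ω → ℝ) : ℝ :=
  Real.sqrt (hellingerSq p q)

/-!
The square-root map `p ↦ (√(p ω))_ω` into Euclidean space scales distances by `√2`, so `h`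
is a pseudometric. Cut-and-paste turns the triangle inequality through `μ_∅` into
`h(μ_∅, μ_{{i} ∪ T}) = h(μ_{i}, μ_T) ≤ h(μ_∅, μ_{i}) + h(μ_∅, μ_T)`, so `h(μ_∅, μ_T)` is at
most the sum of the singleton distances over `T`. Cauchy–Schwarz gives
`h²(μ_∅, μ_T) ≤ |T| · Σ_{i ∈ T} h²(μ_∅, μ_{i})`, and summing over the disjoint blocks `S_j`
with `|S_j| ≤ k` yields the claim.
-/

open Finset Function

theorem Finset.sum_sum_le_sum_of_pairwise_disjoint {ι κ R : Type*} [Fintype ι] [DecidableEq ι]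
    [AddCommMonoid R] [PartialOrder R] [IsOrderedAddMonoid R] {f : ι → R} (hf : ∀ i, 0 ≤ f i)
    (s : κ → Finset ι) (u : Finset κ) (hs : Pairwise (Disjoint on s)) :
    ∑ j ∈ u, ∑ i ∈ s j, f i ≤ ∑ i, f i := by
  rw [← sum_biUnion fun a _ b _ hab => hs hab]
  exact sum_le_univ_sum_of_nonneg hf

section CutAndPaste

variable {ι X : Type*} [DecidableEq ι] [PseudoMetricSpace X] (ν : Finset ι → X)
  (hν : ∀ S T, Disjoint S T → dist (ν (S ∪ T)) (ν ∅) = dist (ν S) (ν T))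
include hν

theorem dist_empty_le_sum_dist_singleton (T : Finset ι) :
    dist (ν ∅) (ν T) ≤ ∑ i ∈ T, dist (ν ∅) (ν {i}) := by
  induction T using Finset.induction_on with
  | empty => simp
  | insert i T hi ih =>
    calc dist (ν ∅) (ν (insert i T)) = dist (ν {i}) (ν T) := by
          rw [dist_comm, insert_eq, hν _ _ (disjoint_singleton_left.2 hi)]
      _ ≤ dist (ν {i}) (ν ∅) + dist (ν ∅) (ν T) := dist_triangle _ _ _
      _ ≤ ∑ j ∈ insert i T, dist (ν ∅) (ν {j}) := by
          rw [sum_insert hi, dist_comm (ν {i})]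
          gcongr

theorem sq_dist_empty_le_card_mul_sum (T : Finset ι) :
    dist (ν ∅) (ν T) ^ 2 ≤ #T * ∑ i ∈ T, dist (ν ∅) (ν {i}) ^ 2 :=
  (pow_le_pow_left₀ dist_nonneg (dist_empty_le_sum_dist_singleton ν hν T) 2).trans
    sq_sum_le_card_mul_sum_sq

theorem sum_sq_dist_empty_le [Fintype ι] {κ : Type*} [Fintype κ] (S : κ → Finset ι)
    (hS : Pairwise (Disjoint on S)) (k : ℕ) (hk : ∀ j, #(S j) ≤ k) :
    ∑ j, dist (ν ∅) (ν (S j)) ^ 2 ≤ k * ∑ i, dist (ν ∅) (ν {i}) ^ 2 :=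
  calc ∑ j, dist (ν ∅) (ν (S j)) ^ 2
      ≤ ∑ j, k * ∑ i ∈ S j, dist (ν ∅) (ν {i}) ^ 2 := by
        gcongr with j
        refine (sq_dist_empty_le_card_mul_sum ν hν (S j)).trans ?_
        gcongr
        exact_mod_cast hk j
    _ ≤ k * ∑ i, dist (ν ∅) (ν {i}) ^ 2 := by
        rw [← mul_sum]
        gcongr
        exact sum_sum_le_sum_of_pairwise_disjoint (fun _ => sq_nonneg _) S univ hS

end CutAndPaste

section Hellinger

variable {Ω : Type*} [Fintype Ω]

noncomputable def hellingerEmbedding (p : Ω → ℝ) : EuclideanSpace ℝ Ω :=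
  WithLp.toLp 2 fun ω => √(p ω)

theorem hellingerSq_eq_dist_sq (p q : Ω → ℝ) :
    hellingerSq p q = dist (hellingerEmbedding p) (hellingerEmbedding q) ^ 2 / 2 := by
  rw [EuclideanSpace.dist_eq, Real.sq_sqrt (by positivity), hellingerSq]
  simp [hellingerEmbedding, Real.dist_eq, sq_abs, div_eq_inv_mul]

theorem hellinger_eq_dist_div_sqrt_two (p q : Ω → ℝ) :
    hellinger p q = dist (hellingerEmbedding p) (hellingerEmbedding q) / √2 := by
  rw [hellinger, hellingerSq_eq_dist_sq, Real.sqrt_div (sq_nonneg _), Real.sqrt_sq dist_nonneg]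

end Hellinger

theorem hellinger_sum_singletons_ge_general {α : ℕ}
    {Ω : Type*} [Fintype Ω]
    (μ : Finset (Fin α) → Ω → ℝ)
    (hcutpaste : ∀ S T : Finset (Fin α), Disjoint S T →
      hellinger (μ (S ∪ T)) (μ ∅) = hellinger (μ S) (μ T))
    (k : ℕ) (m : ℕ) (S : Fin m → Finset (Fin α))
    (hdisj : ∀ i j : Fin m, i ≠ j → Disjoint (S i) (S j))
    (hcard : ∀ j : Fin m, (S j).card ≤ k) :
    (1 / (2 * (k : ℝ))) * ∑ j : Fin m, hellingerSq (μ ∅) (μ (S j)) ≤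
      ∑ i : Fin α, hellingerSq (μ ∅) (μ {i}) := by
  set ν := fun T => hellingerEmbedding (μ T)
  have hν : ∀ S T, Disjoint S T → dist (ν (S ∪ T)) (ν ∅) = dist (ν S) (ν T) := fun S T h => by
    simpa [ν, hellinger_eq_dist_div_sqrt_two] using hcutpaste S T h
  have hblocks := sum_sq_dist_empty_le ν hν S (fun i j => hdisj i j) k hcard
  have hcoef : 1 / (2 * (k : ℝ)) * k ≤ 1 := by
    rw [one_div_mul_eq_div]
    exact div_le_one_of_le₀ (by linarith [k.cast_nonneg (α := ℝ)]) (by positivity)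
  simp only [hellingerSq_eq_dist_sq, ← sum_div]
  calc 1 / (2 * (k : ℝ)) * ((∑ j, dist (ν ∅) (ν (S j)) ^ 2) / 2)
      ≤ 1 / (2 * (k : ℝ)) * ((k * ∑ i, dist (ν ∅) (ν {i}) ^ 2) / 2) := by gcongr
    _ = 1 / (2 * (k : ℝ)) * k * ((∑ i, dist (ν ∅) (ν {i}) ^ 2) / 2) := by ring
    _ ≤ (∑ i, dist (ν ∅) (ν {i}) ^ 2) / 2 := mul_le_of_le_one_left (by positivity) hcoef

/-- If `μ` assigns to each subset `S ⊆ {1,…,α}` a probability mass function `μ S` on a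
nonempty finite set `Ω` satisfying the cut-and-paste property
`h(μ (S ∪ T), μ ∅) = h(μ S, μ T)` for disjoint `S, T`, and `S_1, …, S_m` are pairwise
disjoint subsets each of size at most `k` (with `k ≥ 1`), then
`Σ_{i=1}^{α} h²(μ ∅, μ {i}) ≥ (1/(2k)) · Σ_{j=1}^{m} h²(μ ∅, μ (S j))`. -/
theorem hellinger_sum_singletons_ge {α : ℕ} (hα : 0 < α)
    {Ω : Type*} [Fintype Ω] [Nonempty Ω]
    (μ : Finset (Fin α) → Ω → ℝ)
    (hnonneg : ∀ S ω, 0 ≤ μ S ω)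
    (hsum : ∀ S, ∑ ω, μ S ω = 1)
    (hcutpaste : ∀ S T : Finset (Fin α), Disjoint S T →
      hellinger (μ (S ∪ T)) (μ ∅) = hellinger (μ S) (μ T))
    (k : ℕ) (hk : 1 ≤ k) (m : ℕ) (S : Fin m → Finset (Fin α))
    (hdisj : ∀ i j : Fin m, i ≠ j → Disjoint (S i) (S j))
    (hcard : ∀ j : Fin m, (S j).card ≤ k) :
    (1 / (2 * (k : ℝ))) * ∑ j : Fin m, hellingerSq (μ ∅) (μ (S j)) ≤
      ∑ i : Fin α, hellingerSq (μ ∅) (μ {i}) :=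
  hellinger_sum_singletons_ge_general μ hcutpaste k m S hdisj hcard
end

section
/- Let N be a positive integer, let H_1, …, H_N be nonnegative integers, and let β ≥ 0 be a real number such that Σ_{i=1}^{N} H_i·(H_i − 1)/2 ≤ β·N. Then Σ_{i=1}^{N} H_i ≤ N·√(4β + 1). -/
/-- If items `1, …, N` appear on `H_1, …, H_N` servers respectively and the total number
of pairwise collisions `Σ_i H_i·(H_i − 1)/2` is at most `β·N`, then
`Σ_i H_i ≤ N·√(4β + 1)`. -/
theorem sum_le_of_pairwise_collisions (N : ℕ) (hN : 0 < N) (H : Fin N → ℕ)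
    (β : ℝ) (hβ : 0 ≤ β)
    (hcoll : ∑ i, (H i : ℝ) * ((H i : ℝ) - 1) / 2 ≤ β * N) :
    ∑ i, (H i : ℝ) ≤ N * Real.sqrt (4 * β + 1) := by
  have hNpos : (0:ℝ) < N := by exact_mod_cast hN
  have hsq : ∑ i, (H i : ℝ) ^ 2 ≤ (4 * β + 1) * N := by
    have h1 : ∑ i, ((H i : ℝ) ^ 2 - 1) / 4 ≤ ∑ i, (H i : ℝ) * ((H i : ℝ) - 1) / 2 := by
      apply Finset.sum_le_sum
      intro i _
      nlinarith [sq_nonneg ((H i : ℝ) - 1)]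
    have h2 : ∑ i, ((H i : ℝ) ^ 2 - 1) / 4 = (∑ i, (H i : ℝ) ^ 2 - N) / 4 := by
      have h3 : ∑ i, ((H i : ℝ) ^ 2 - 1) = ∑ i, (H i : ℝ) ^ 2 - N := by
        rw [Finset.sum_sub_distrib]
        simp
      rw [← Finset.sum_div, h3]
    nlinarith [h1.trans hcoll]
  have hcs : (∑ i, (H i : ℝ)) ^ 2 ≤ N * ∑ i, (H i : ℝ) ^ 2 := by
    simpa [Finset.card_univ] using
      sq_sum_le_card_mul_sum_sq (s := (Finset.univ : Finset (Fin N))) (f := fun i => (H i : ℝ))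
  have hsum_nonneg : 0 ≤ ∑ i, (H i : ℝ) := Finset.sum_nonneg fun i _ => by positivity
  have hb : (0:ℝ) ≤ 4 * β + 1 := by linarith
  have : (∑ i, (H i : ℝ)) ^ 2 ≤ (N * Real.sqrt (4 * β + 1)) ^ 2 := by
    have : (N * Real.sqrt (4 * β + 1)) ^ 2 = N ^ 2 * (4 * β + 1) := by
      rw [mul_pow, Real.sq_sqrt hb]
    nlinarith [hcs, hsq]
  exact le_of_pow_le_pow_left₀ (by norm_num) (by positivity) this
end

section
/- Let 𝒳 and 𝒴 be nonempty finite sets and let p : 𝒳 × 𝒴 → [0,1] be a joint probability mass function (Σ_{x,y} p(x,y) = 1), with marginal p_Y(y) = Σ_x p(x,y). Define the conditional entropy H(X|Y) = Σ_{(x,y): p(x,y) > 0} p(x,y)·log₂(p_Y(y)/p(x,y)). Then there exists a function g : 𝒴 → 𝒳 such that Σ_{y∈𝒴} p(g(y), y) ≥ 2^{−H(X|Y)}; equivalently, the error probability P(g(Y) ≠ X) is at most 1 − 2^{−H(X|Y)}. -/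
/-- Maximum likelihood estimation principle: for a joint probability mass function `p`
on a finite set `𝒳 × 𝒴` with conditional entropy
`H(X|Y) = Σ_{(x,y): p(x,y)>0} p(x,y)·log₂(p_Y(y)/p(x,y))` (where `p_Y(y) = Σ_x p(x,y)`),
there exists a decoder `g : 𝒴 → 𝒳` whose success probability `Σ_y p(g(y), y)` is at
least `2^{−H(X|Y)}`; equivalently, the error probability is at most `1 − 2^{−H(X|Y)}`. -/
theorem maximum_likelihood_estimation
    {𝒳 𝒴 : Type*} [Fintype 𝒳] [Fintype 𝒴] [Nonempty 𝒳] [Nonempty 𝒴]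
    (p : 𝒳 × 𝒴 → ℝ) (hnonneg : ∀ z, 0 ≤ p z) (hsum : ∑ z, p z = 1) :
    ∃ g : 𝒴 → 𝒳,
      (2 : ℝ) ^ (-(∑ z ∈ Finset.univ.filter (fun z : 𝒳 × 𝒴 => 0 < p z),
          p z * Real.logb 2 ((∑ x, p (x, z.2)) / p z))) ≤ ∑ y, p (g y, y) := by
  classical
  set pY : 𝒴 → ℝ := fun y => ∑ x, p (x, y) with hpY
  have hpY_nonneg : ∀ y, 0 ≤ pY y := fun y => Finset.sum_nonneg fun x _ => hnonneg _
  have hle : ∀ x y, p (x, y) ≤ pY y := fun x y =>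
    Finset.single_le_sum (fun x _ => hnonneg (x, y)) (Finset.mem_univ x)
  have hg : ∀ y : 𝒴, ∃ x : 𝒳, ∀ x', p (x', y) ≤ p (x, y) := by
    intro y
    obtain ⟨x, -, hx⟩ := Finset.exists_max_image Finset.univ (fun x => p (x, y))
      Finset.univ_nonempty
    exact ⟨x, fun x' => hx x' (Finset.mem_univ x')⟩
  choose g hgmax using hg
  refine ⟨g, ?_⟩
  set S := Finset.univ.filter (fun z : 𝒳 × 𝒴 => 0 < p z) with hS
  have hw1 : ∑ z ∈ S, p z = 1 := by
    rw [hS, Finset.sum_filter_of_ne, hsum]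
    exact fun z _ hz => (hnonneg z).lt_of_ne (Ne.symm hz)
  have hSne : S.Nonempty := by
    rcases S.eq_empty_or_nonempty with h | h
    · rw [h, Finset.sum_empty] at hw1; norm_num at hw1
    · exact h
  have hpos : ∀ z ∈ S, 0 < p z := fun z hz => (Finset.mem_filter.mp hz).2
  have hpYpos : ∀ z ∈ S, 0 < pY z.2 := fun z hz => lt_of_lt_of_le (hpos z hz) (hle z.1 z.2)
  -- Jensen's inequality for the concave function log
  have hjensen : ∑ z ∈ S, p z * Real.log (p z / pY z.2) ≤
      Real.log (∑ z ∈ S, p z * (p z / pY z.2)) := by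
    have := (strictConcaveOn_log_Ioi.concaveOn).le_map_sum
      (t := S) (w := fun z => p z) (p := fun z => p z / pY z.2)
      (fun z hz => (hpos z hz).le) hw1
      (fun z hz => Set.mem_Ioi.mpr (div_pos (hpos z hz) (hpYpos z hz)))
    simpa [smul_eq_mul] using this
  have hQpos : 0 < ∑ z ∈ S, p z * (p z / pY z.2) :=
    Finset.sum_pos (fun z hz => mul_pos (hpos z hz) (div_pos (hpos z hz) (hpYpos z hz))) hSne
  -- rewrite the exponent
  have hexp : -(∑ z ∈ S, p z * Real.logb 2 (pY z.2 / p z)) * Real.log 2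
      = ∑ z ∈ S, p z * Real.log (p z / pY z.2) := by
    rw [neg_mul, Finset.sum_mul, ← Finset.sum_neg_distrib]
    refine Finset.sum_congr rfl fun z hz => ?_
    have h2 : Real.log 2 ≠ 0 :=
      Real.log_ne_zero_of_pos_of_ne_one (by norm_num) (by norm_num)
    have hlog : Real.log (p z / pY z.2) = -Real.log (pY z.2 / p z) := by
      rw [← Real.log_inv, inv_div]
    rw [hlog, Real.logb]
    field_simp
  have hstep1 : (2 : ℝ) ^ (-(∑ z ∈ S, p z * Real.logb 2 (pY z.2 / p z)))
      ≤ ∑ z ∈ S, p z * (p z / pY z.2) := by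
    rw [Real.rpow_def_of_pos (by norm_num : (0:ℝ) < 2), mul_comm, hexp]
    calc Real.exp (∑ z ∈ S, p z * Real.log (p z / pY z.2))
        ≤ Real.exp (Real.log (∑ z ∈ S, p z * (p z / pY z.2))) := Real.exp_le_exp.mpr hjensen
      _ = ∑ z ∈ S, p z * (p z / pY z.2) := Real.exp_log hQpos
  have hstep2 : ∑ z ∈ S, p z * (p z / pY z.2)
      ≤ ∑ z ∈ S, p z * (p (g z.2, z.2) / pY z.2) := by
    refine Finset.sum_le_sum fun z hz => ?_
    exact mul_le_mul_of_nonneg_left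
      ((div_le_div_iff_of_pos_right (hpYpos z hz)).mpr (hgmax z.2 z.1)) (hnonneg z)
  have hstep3 : ∑ z ∈ S, p z * (p (g z.2, z.2) / pY z.2)
      ≤ ∑ z : 𝒳 × 𝒴, p z * (p (g z.2, z.2) / pY z.2) := by
    refine Finset.sum_le_sum_of_subset_of_nonneg (Finset.filter_subset _ _) ?_
    intro z _ _
    exact mul_nonneg (hnonneg z) (div_nonneg (hnonneg _) (hpY_nonneg _))
  have hstep4 : ∑ z : 𝒳 × 𝒴, p z * (p (g z.2, z.2) / pY z.2) = ∑ y, p (g y, y) := by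
    rw [Fintype.sum_prod_type, Finset.sum_comm]
    refine Finset.sum_congr rfl fun y _ => ?_
    rcases eq_or_lt_of_le (hpY_nonneg y) with h0 | h0
    · have hz : p (g y, y) = 0 := le_antisymm (h0 ▸ hle (g y) y) (hnonneg _)
      simp [hz]
    · show ∑ x : 𝒳, p (x, y) * (p (g y, y) / pY y) = p (g y, y)
      rw [← Finset.sum_mul,
        show (∑ x, p (x, y)) = pY y from rfl,
        mul_div_assoc', mul_comm, mul_div_assoc, div_self h0.ne', mul_one]
  calc (2 : ℝ) ^ (-(∑ z ∈ S, p z * Real.logb 2 (pY z.2 / p z)))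
      ≤ ∑ z ∈ S, p z * (p z / pY z.2) := hstep1
    _ ≤ ∑ z ∈ S, p z * (p (g z.2, z.2) / pY z.2) := hstep2
    _ ≤ ∑ z : 𝒳 × 𝒴, p z * (p (g z.2, z.2) / pY z.2) := hstep3
    _ = ∑ y, p (g y, y) := hstep4
end
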